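/- Let n ≥ 1, let C be an n×n real matrix with nonnegative entries, and let u, v ∈ ℝ^n have strictly positive entries and satisfy u = C·u + v. Then: (1) the spectral radius satisfies ρ(C) < 1; (2) I − C is invertible and all entries of (I − C)^{-1} are nonnegative; (3) max_{i} ∑_{j} |((I − C)^{-1})_{ij}| ≤ (max_{ℓ} u_ℓ)/(min_{ℓ} v_ℓ); (4) det(I − C) > 0. -/

import Mathlib

open Matrix BigOperators

/-- The spectral radius of a real square matrix: the maximum modulus of its complex
eigenvalues (the roots of its characteristic polynomial over `ℂ`). -/
noncomputable def specRad {n : ℕ} (C : Matrix (Fin n) (Fin n) ℝ) : ℝ :=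
  sSup {x : ℝ | ∃ μ : ℂ, (C.map (Complex.ofReal)).charpoly.IsRoot μ ∧ x = ‖μ‖}

/-!
Everything rests on a Collatz–Wielandt comparison with the strictly subinvariant vector `u`
(`C u < u` entrywise, since `v > 0`): if `y ≥ 0`, `y ≠ 0` and `r y ≤ C y`, then at an index `i`
where `y / u` is maximal one gets `r uᵢ ≤ (C u)ᵢ < uᵢ`, so `r < 1`.

Applied to `|z|` for an eigenvector `z` (over `ℝ` or `ℂ`) it shows that every eigenvalue of `C`
has modulus `< 1`, which gives `ρ(C) < 1` and the invertibility of `1 - C`. Applied to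
the negative part of `x` it shows that `C x ≤ x` forces `x ≥ 0`, so the columns of `(1 - C)⁻¹`
are nonnegative; the row-sum bound then follows from `(1 - C)⁻¹ v = u`. Finally every `t • C`
with `t ∈ [0, 1]` satisfies the same hypotheses, so `det (1 - t • C)` never vanishes on `[0, 1]`
and keeps the sign of `det 1 = 1`.
-/

open Finset

namespace Matrix

variable {ι : Type*} [Fintype ι] {C : Matrix ι ι ℝ} {u : ι → ℝ}

lemma mulVec_mono {B : Matrix ι ι ℝ} (hB : ∀ i j, 0 ≤ B i j) {x y : ι → ℝ}
    (hxy : x ≤ y) : B *ᵥ x ≤ B *ᵥ y :=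
  fun i => sum_le_sum fun k _ => mul_le_mul_of_nonneg_left (hxy k) (hB i k)

lemma mulVec_nonneg {B : Matrix ι ι ℝ} (hB : ∀ i j, 0 ≤ B i j) {x : ι → ℝ}
    (hx : 0 ≤ x) : 0 ≤ B *ᵥ x := by
  simpa using mulVec_mono hB hx

lemma exists_mul_le_mulVec_of_mul_le_mulVec (hC : ∀ i j, 0 ≤ C i j) (hu : ∀ i, 0 < u i)
    {y : ι → ℝ} (hy : 0 ≤ y) (hy0 : y ≠ 0) {r : ℝ} (hr : ∀ i, r * y i ≤ (C *ᵥ y) i) :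
    ∃ i, r * u i ≤ (C *ᵥ u) i := by
  obtain ⟨j, hj⟩ := Function.ne_iff.mp hy0
  obtain ⟨i, -, hi⟩ := exists_max_image univ (fun k => y k / u k) ⟨j, mem_univ j⟩
  set s := y i / u i
  have hs : 0 < s := (div_pos ((hy j).lt_of_ne' hj) (hu j)).trans_le (hi j (mem_univ j))
  have hys : ∀ k, y k ≤ s * u k := fun k => (div_le_iff₀ (hu k)).mp (hi k (mem_univ k))
  have hCy : (C *ᵥ y) i ≤ s * (C *ᵥ u) i := by
    simp only [mulVec, dotProduct, mul_sum]
    exact sum_le_sum fun k _ => by nlinarith [hys k, hC i k]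
  refine ⟨i, le_of_mul_le_mul_left ?_ hs⟩
  calc s * (r * u i) = r * y i := by rw [mul_left_comm, div_mul_cancel₀ _ (hu i).ne']
    _ ≤ s * (C *ᵥ u) i := (hr i).trans hCy

lemma sup'_sum_abs_le_sup'_mulVec_div_inf' {B : Matrix ι ι ℝ} (hB : ∀ i j, 0 ≤ B i j)
    {v : ι → ℝ} (hv : ∀ i, 0 < v i) (h : (univ : Finset ι).Nonempty) :
    univ.sup' h (fun i => ∑ j, |B i j|) ≤ univ.sup' h (B *ᵥ v) / univ.inf' h v := by
  have hm : 0 < univ.inf' h v := (lt_inf'_iff h).mpr fun i _ => hv i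
  refine sup'_le h _ fun i _ => (le_div_iff₀ hm).mpr ?_
  calc (∑ j, |B i j|) * univ.inf' h v = ∑ j, B i j * univ.inf' h v := by
        simp only [abs_of_nonneg (hB _ _), sum_mul]
    _ ≤ (B *ᵥ v) i :=
        sum_le_sum fun j _ => mul_le_mul_of_nonneg_left (inf'_le v (mem_univ j)) (hB i j)
    _ ≤ univ.sup' h (B *ᵥ v) := le_sup' (B *ᵥ v) (mem_univ i)

variable (hC : ∀ i j, 0 ≤ C i j) (hu : ∀ i, 0 < u i) (hCu : ∀ i, (C *ᵥ u) i < u i)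
include hC hu hCu

lemma lt_one_of_mul_le_mulVec {y : ι → ℝ} (hy : 0 ≤ y) (hy0 : y ≠ 0) {r : ℝ}
    (hr : ∀ i, r * y i ≤ (C *ᵥ y) i) : r < 1 := by
  obtain ⟨i, hi⟩ := exists_mul_le_mulVec_of_mul_le_mulVec hC hu hy hy0 hr
  by_contra! h
  nlinarith [hCu i, hu i]

lemma norm_lt_one_of_mulVec_eq_smul {𝕜 : Type*} [RCLike 𝕜] {z : ι → 𝕜} (hz : z ≠ 0) {μ : 𝕜}
    (h : C.map (↑) *ᵥ z = μ • z) : ‖μ‖ < 1 := by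
  refine lt_one_of_mul_le_mulVec hC hu hCu (y := fun i => ‖z i‖) (fun i => norm_nonneg _)
    (fun h0 => hz (funext fun i => norm_eq_zero.mp (congrFun h0 i))) fun i => ?_
  calc ‖μ‖ * ‖z i‖ = ‖(C.map (↑) *ᵥ z) i‖ := by rw [h, Pi.smul_apply, smul_eq_mul, norm_mul]
    _ ≤ ∑ k, ‖(C i k : 𝕜) * z k‖ := norm_sum_le _ _
    _ = (C *ᵥ fun i => ‖z i‖) i := by
      simp only [norm_mul, RCLike.norm_ofReal, abs_of_nonneg (hC _ _)]; rfl

lemma det_one_sub_ne_zero [DecidableEq ι] : (1 - C).det ≠ 0 := by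
  intro h
  obtain ⟨x, hx, hx0⟩ := exists_mulVec_eq_zero_iff.mpr h
  have hCx : C.map (RCLike.ofReal (K := ℝ)) *ᵥ x = (1 : ℝ) • x := by
    rw [sub_mulVec, one_mulVec, sub_eq_zero] at hx0
    rw [RCLike.ofReal_real_eq_id, map_id, one_smul, ← hx0]
  simpa using norm_lt_one_of_mulVec_eq_smul hC hu hCu hx hCx

lemma det_one_sub_pos [DecidableEq ι] : 0 < (1 - C).det := by
  have hdet : ∀ t ∈ Set.Icc (0 : ℝ) 1, (1 - t • C).det ≠ 0 := fun t ⟨ht0, ht1⟩ =>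
    det_one_sub_ne_zero (C := t • C) (fun i j => mul_nonneg ht0 (hC i j)) hu fun i => by
      have : 0 ≤ (C *ᵥ u) i := mulVec_nonneg hC (fun k => (hu k).le) i
      rw [smul_mulVec, Pi.smul_apply, smul_eq_mul]
      nlinarith [hCu i]
  have hcont : Continuous fun t : ℝ => (1 - t • C).det :=
    (continuous_const.sub (continuous_id.smul continuous_const)).matrix_det
  by_contra! hneg
  have hzero : (0 : ℝ) ∈ Set.Icc (1 - (1 : ℝ) • C).det (1 - (0 : ℝ) • C).det :=
    ⟨by simpa using hneg, by simp⟩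
  obtain ⟨t, ht, ht0⟩ := intermediate_value_Icc' zero_le_one hcont.continuousOn hzero
  exact hdet t ht ht0

lemma nonneg_of_mulVec_le {x : ι → ℝ} (hx : C *ᵥ x ≤ x) : 0 ≤ x := by
  by_contra hneg
  set y : ι → ℝ := fun i => max (-x i) 0
  have hy : 0 ≤ y := fun i => le_max_right _ _
  have hy0 : y ≠ 0 := fun h0 => hneg fun i => by
    simpa [y] using (congrFun h0 i).le
  have hxy : -x ≤ y := fun i => le_max_left _ _
  refine (lt_one_of_mul_le_mulVec hC hu hCu hy hy0 (r := 1) fun i => ?_).false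
  have hCy : -(C *ᵥ x) i ≤ (C *ᵥ y) i := by
    simpa [mulVec_neg] using mulVec_mono hC hxy i
  rw [one_mul]
  exact max_le (by linarith [hx i]) (mulVec_nonneg hC hy i)

lemma inv_one_sub_nonneg [DecidableEq ι] (i j : ι) : 0 ≤ (1 - C)⁻¹ i j := by
  set x := (1 - C)⁻¹ *ᵥ Pi.single j 1
  have hx : (1 - C) *ᵥ x = Pi.single j 1 := by
    rw [mulVec_mulVec, mul_nonsing_inv _ (det_one_sub_ne_zero hC hu hCu).isUnit, one_mulVec]
  have hCx : C *ᵥ x ≤ x := by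
    have h0 : (0 : ι → ℝ) ≤ Pi.single j 1 := Pi.single_nonneg.mpr zero_le_one
    rwa [← hx, sub_mulVec, one_mulVec, sub_nonneg] at h0
  simpa [x, mulVec_single_one] using nonneg_of_mulVec_le hC hu hCu hCx i

end Matrix

lemma specRad_lt_one {n : ℕ} {C : Matrix (Fin n) (Fin n) ℝ} {u : Fin n → ℝ}
    (hC : ∀ i j, 0 ≤ C i j) (hu : ∀ i, 0 < u i) (hCu : ∀ i, (C *ᵥ u) i < u i) :
    specRad C < 1 := by
  set S := {x : ℝ | ∃ μ : ℂ, (C.map Complex.ofReal).charpoly.IsRoot μ ∧ x = ‖μ‖}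
  have hS : ∀ x ∈ S, x < 1 := by
    rintro _ ⟨μ, hμ, rfl⟩
    have h0 : (scalar (Fin n) μ - C.map Complex.ofReal).det = 0 := by
      rw [← eval_charpoly]; exact hμ
    obtain ⟨z, hz, hz0⟩ := exists_mulVec_eq_zero_iff.mpr h0
    rw [sub_mulVec, sub_eq_zero] at hz0
    refine C.norm_lt_one_of_mulVec_eq_smul hC hu hCu hz ?_
    change C.map Complex.ofReal *ᵥ z = μ • z
    rw [← hz0]
    ext i
    simp [scalar_apply, mulVec_diagonal]
  have hfin : S.Finite :=
    ((Polynomial.finite_setOfPred_isRoot (charpoly_monic _).ne_zero).image (‖·‖)).subset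
      fun _ ⟨μ, hμ, hx⟩ => ⟨μ, hμ, hx.symm⟩
  rcases S.eq_empty_or_nonempty with h | h
  · change sSup S < 1
    rw [h, Real.sSup_empty]
    exact one_pos
  · exact (hfin.csSup_lt_iff h).mpr hS

/-- if `C ≽ 0` and `u = Cu + v` with `u, v ≻ 0`, then `ρ(C) < 1`,
`I − C` is invertible with nonnegative inverse, the max-row norm of `(I − C)⁻¹`
is at most `(max u)/(min v)`, and `det(I − C) > 0`. -/
theorem stmt_15 (n : ℕ) (hn : 0 < n) (C : Matrix (Fin n) (Fin n) ℝ)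
    (hC : ∀ i j, 0 ≤ C i j) (u v : Fin n → ℝ)
    (hu : ∀ i, 0 < u i) (hv : ∀ i, 0 < v i)
    (huv : u = C.mulVec u + v) :
    specRad C < 1 ∧
    IsUnit (1 - C) ∧
    (∀ i j, 0 ≤ (1 - C)⁻¹ i j) ∧
    (Finset.univ.sup' (Finset.univ_nonempty_iff.mpr ⟨⟨0, hn⟩⟩)
        (fun i => ∑ j, |(1 - C)⁻¹ i j|) ≤
      (Finset.univ.sup' (Finset.univ_nonempty_iff.mpr ⟨⟨0, hn⟩⟩) u) /
        (Finset.univ.inf' (Finset.univ_nonempty_iff.mpr ⟨⟨0, hn⟩⟩) v)) ∧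
    0 < (1 - C).det := by
  have hCu : ∀ i, (C *ᵥ u) i < u i := fun i => by
    have := congrFun huv i
    rw [Pi.add_apply] at this
    linarith [hv i]
  have hdet := det_one_sub_pos hC hu hCu
  have hinv : (1 - C)⁻¹ *ᵥ v = u := by
    have hvu : (1 - C) *ᵥ u = v := by
      rw [sub_mulVec, one_mulVec]
      exact (eq_sub_of_add_eq' huv.symm).symm
    rw [← hvu, mulVec_mulVec, nonsing_inv_mul _ hdet.ne'.isUnit, one_mulVec]
  have hnonneg := inv_one_sub_nonneg hC hu hCu
  refine ⟨specRad_lt_one hC hu hCu, (isUnit_iff_isUnit_det _).mpr hdet.ne'.isUnit, hnonneg,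
    ?_, hdet⟩
  simpa only [hinv] using sup'_sum_abs_le_sup'_mulVec_div_inf' hnonneg hv _
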